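/- Let R be a ring and P a totally faithful right R-module. If f : N → M is a morphism of left R-modules such that P ⊗_R f : P ⊗_R N → P ⊗_R M is an isomorphism of abelian groups, then f is an isomorphism. -/

import Mathlib

open TensorProduct

/-- A right `R`-module `P` (over a commutative ring, so right = left modules)
is *totally faithful* if for every left `R`-module `M` and every `m ∈ M`,
`p ⊗ₜ m = 0` for all `p ∈ P` implies `m = 0`. -/
def TotallyFaithful (R : Type*) [CommRing R] (P : Type*) [AddCommGroup P] [Module R P] : Prop :=
  ∀ (M : Type) [AddCommGroup M] [Module R M] (m : M),
    (∀ p : P, (p ⊗ₜ[R] m : P ⊗[R] M) = 0) → m = 0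

namespace TotallyFaithful

variable {R : Type*} [CommRing R] {P : Type*} [AddCommGroup P] [Module R P]

theorem eq_zero_of_lTensor_eq_zero (hP : TotallyFaithful R P) {M Q : Type}
    [AddCommGroup M] [Module R M] [AddCommGroup Q] [Module R Q] {g : M →ₗ[R] Q}
    (hg : LinearMap.lTensor P g = 0) : g = 0 := by
  ext m
  exact hP Q (g m) fun p => by simpa using LinearMap.congr_fun hg (p ⊗ₜ m)

theorem injective_of_lTensor_injective (hP : TotallyFaithful R P) {N M : Type}
    [AddCommGroup N] [Module R N] [AddCommGroup M] [Module R M] {f : N →ₗ[R] M}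
    (hf : Function.Injective (LinearMap.lTensor P f)) : Function.Injective f := by
  refine (injective_iff_map_eq_zero f).2 fun n hn => hP N n fun p => hf ?_
  simp [hn]

theorem surjective_of_lTensor_surjective (hP : TotallyFaithful R P) {N M : Type}
    [AddCommGroup N] [Module R N] [AddCommGroup M] [Module R M] {f : N →ₗ[R] M}
    (hf : Function.Surjective (LinearMap.lTensor P f)) : Function.Surjective f := by
  have hmkQ : LinearMap.lTensor P (LinearMap.range f).mkQ = 0 := by
    refine LinearMap.ext fun x => ?_
    obtain ⟨y, rfl⟩ := hf x
    rw [← LinearMap.comp_apply, ← LinearMap.lTensor_comp, LinearMap.range_mkQ_comp,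
      LinearMap.lTensor_zero, LinearMap.zero_apply, LinearMap.zero_apply]
  rw [← LinearMap.range_eq_top, ← Submodule.ker_mkQ (LinearMap.range f), LinearMap.ker_eq_top]
  exact hP.eq_zero_of_lTensor_eq_zero hmkQ

end TotallyFaithful

theorem totallyFaithful_reflects_isomorphism
    {R : Type} [CommRing R] {P : Type} [AddCommGroup P] [Module R P]
    (hP : TotallyFaithful R P)
    {N M : Type} [AddCommGroup N] [Module R N] [AddCommGroup M] [Module R M]
    (f : N →ₗ[R] M) (hf : Function.Bijective (LinearMap.lTensor P f)) :
    Function.Bijective f :=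
  ⟨hP.injective_of_lTensor_injective hf.injective, hP.surjective_of_lTensor_surjective hf.surjective⟩
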